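/- arXiv:2006.00118 — 5 statements merged into one kernel-verified Lean document; each statement's English description precedes it below -/
import Mathlib

section
/- Fix real numbers x > 0, ħ > 0 and an integer d, and for q > 0 define {x}_d := (−√(q/ħ))^d · (ħx; q)_d/(qx; q)_d, where (y; q)_d := ∏_{l=0}^{d−1}(1 − q^l y) for d ≥ 0 and (y; q)_d := ∏_{l=1}^{−d}(1 − q^{−l} y)^{−1} for d < 0 (this expression is defined for all q > 0 outside a finite set). Then the limits lim_{q→0⁺} q^{−|d|/2} {x}_d and lim_{q→+∞} q^{|d|/2} {x}_d exist in ℝ. Consequently, for any x_1,…,x_n > 0 and D_1,…,D_n ∈ ℤ, the function q ↦ q^{−(1/2)Σ_{i=1}^n D_i} ∏_{i=1}^n {x_i}_{D_i} has finite limits as q → 0⁺ and as q → +∞. -/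
/-!
The bracket has two exact symmetries. The duality `{x}_d(q, ħ) = {ħx}_{-d}(q⁻¹, ħ⁻¹)` comes
from `(y; q⁻¹)_{-n} = 1 / (qy; q)_n`; the inversion `{x}_n(q⁻¹, ħ⁻¹) = {x⁻¹}_n(q, ħ)` for
`n ≥ 0` comes from pulling `-q^l ħx` and `-q^(l+1) x` out of the `l`-th factors. Together they
reduce every limit to `q → 0⁺` with `d = n ≥ 0`, where
`q^(-n/2) {x}_n = (-ħ^(-1/2))^n ∏_{l<n} (1 - q^l ħx) / (1 - q^(l+1) x)`
is a rational function of `q` regular at `0`. In the product, `q^(-D/2) {x}_D` differs from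
`q^(-|D|/2) {x}_D` by the factor `q^((|D|-D)/2)`, whose exponent is nonnegative.
-/

open Filter

noncomputable section

/-- the q-Pochhammer symbol `(y; q)_d` for `d ∈ ℤ` (real version). -/
def qPochZR (q y : ℝ) : ℤ → ℝ
  | Int.ofNat d => ∏ l ∈ Finset.range d, (1 - q ^ l * y)
  | Int.negSucc m => (∏ l ∈ Finset.range (m + 1), (1 - q ^ (-(l : ℤ) - 1) * y))⁻¹

/-- `{x}_d := (-√(q/ħ))^d (ħx;q)_d/(qx;q)_d`. -/
def braceR (q hbar x : ℝ) (d : ℤ) : ℝ :=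
  (-Real.sqrt (q / hbar)) ^ d * qPochZR q (hbar * x) d / qPochZR q (q * x) d

open Finset Topology

theorem qPochZR_natCast (q y : ℝ) (n : ℕ) :
    qPochZR q y n = ∏ l ∈ range n, (1 - q ^ l * y) := rfl

theorem qPochZR_inv_neg_natCast (q y : ℝ) (n : ℕ) :
    qPochZR q⁻¹ y (-n) = (qPochZR q (q * y) n)⁻¹ := by
  cases n with
  | zero => simp [qPochZR]
  | succ m =>
    change (∏ l ∈ range (m + 1), (1 - q⁻¹ ^ (-(l : ℤ) - 1) * y))⁻¹ = _
    rw [qPochZR_natCast]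
    congr 1
    refine prod_congr rfl fun l _ => ?_
    rw [show -(l : ℤ) - 1 = -((l + 1 : ℕ) : ℤ) by push_cast; ring, inv_zpow', neg_neg,
      zpow_natCast, pow_succ]
    ring

theorem braceR_natCast (q h x : ℝ) (n : ℕ) :
    braceR q h x n =
      (-√(q / h)) ^ n * ∏ l ∈ range n, (1 - q ^ l * (h * x)) / (1 - q ^ (l + 1) * x) := by
  rw [braceR, zpow_natCast, qPochZR_natCast, qPochZR_natCast, mul_div_assoc, ← prod_div_distrib]
  refine congrArg _ (prod_congr rfl fun l _ => ?_)
  ring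

theorem braceR_natCast_eq_inv_neg {q h : ℝ} (hq : q ≠ 0) (hh : h ≠ 0) (x : ℝ) (n : ℕ) :
    braceR q h x n = braceR q⁻¹ h⁻¹ (h * x) (-n) := by
  have hsqrt : (-√(q⁻¹ / h⁻¹)) ^ (-n : ℤ) = (-√(q / h)) ^ n := by
    rw [zpow_neg, zpow_natCast, ← inv_pow, inv_div_inv, ← neg_inv, ← Real.sqrt_inv, inv_div]
  rw [braceR, braceR, hsqrt, qPochZR_inv_neg_natCast, qPochZR_inv_neg_natCast,
    inv_mul_cancel_left₀ hh, mul_inv_cancel_left₀ hq, div_inv_eq_mul, zpow_natCast]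
  ring

theorem braceR_eq_inv_neg {q h : ℝ} (hq : q ≠ 0) (hh : h ≠ 0) (x : ℝ) (d : ℤ) :
    braceR q h x d = braceR q⁻¹ h⁻¹ (h * x) (-d) := by
  obtain ⟨n, rfl | rfl⟩ := d.eq_nat_or_neg
  · exact braceR_natCast_eq_inv_neg hq hh x n
  · rw [neg_neg, braceR_natCast_eq_inv_neg (inv_ne_zero hq) (inv_ne_zero hh), inv_inv, inv_inv,
      inv_mul_cancel_left₀ hh]

theorem one_sub_div_one_sub {K : Type*} [Field K] {a b : K} (ha : a ≠ 0) (hb : b ≠ 0) :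
    (1 - a) / (1 - b) = a / b * ((1 - a⁻¹) / (1 - b⁻¹)) := by
  rw [div_mul_div_comm, mul_one_sub, mul_one_sub, mul_inv_cancel₀ ha, mul_inv_cancel₀ hb,
    ← neg_sub, ← neg_sub b, neg_div_neg_eq]

theorem braceR_inv_inv_inv_natCast {q h x : ℝ} (hq : q ≠ 0) (hh : h ≠ 0) (hx : x ≠ 0)
    (n : ℕ) :
    braceR q⁻¹ h⁻¹ x⁻¹ n = braceR q h x n := by
  have hfactor (l : ℕ) : (1 - q ^ l * (h * x)) / (1 - q ^ (l + 1) * x) =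
      h / q * ((1 - q⁻¹ ^ l * (h⁻¹ * x⁻¹)) / (1 - q⁻¹ ^ (l + 1) * x⁻¹)) := by
    rw [one_sub_div_one_sub (by positivity) (by positivity)]
    congr 1
    · field_simp
      ring
    · simp only [mul_inv, inv_pow]
  have hsqrt : -√(q / h) * (h / q) = -√(q⁻¹ / h⁻¹) := by
    rw [inv_div_inv, ← inv_div h q, Real.sqrt_inv, neg_mul, inv_mul_eq_div, Real.div_sqrt]
  rw [braceR_natCast, braceR_natCast, prod_congr rfl fun l _ => hfactor l, prod_mul_distrib,
    prod_const, card_range, ← mul_assoc, ← mul_pow, hsqrt]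

theorem rpow_neg_half_mul_neg_sqrt_div_pow {q : ℝ} (hq : 0 < q) (h : ℝ) (n : ℕ) :
    q ^ (-(n : ℝ) / 2) * (-√(q / h)) ^ n = (-(√h)⁻¹) ^ n := by
  have hsqrt : q ^ (-(n : ℝ) / 2) = ((√q)⁻¹) ^ n := by
    rw [Real.sqrt_eq_rpow, ← Real.rpow_neg hq.le, ← Real.rpow_mul_natCast hq.le]
    ring_nf
  have hq' : √q ≠ 0 := (Real.sqrt_pos.2 hq).ne'
  rw [hsqrt, ← mul_pow, Real.sqrt_div hq.le, mul_neg, div_eq_mul_inv,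
    inv_mul_cancel_left₀ hq']

theorem braceR_neg_natCast {q h x : ℝ} (hq : q ≠ 0) (hh : h ≠ 0) (hx : x ≠ 0) (n : ℕ) :
    braceR q h x (-n) = braceR q h (h * x)⁻¹ n := by
  rw [braceR_eq_inv_neg hq hh, neg_neg, ← braceR_inv_inv_inv_natCast hq hh (by positivity),
    inv_inv]

theorem tendsto_atTop_of_tendsto_comp_inv {f g : ℝ → ℝ} {L : ℝ} (hfg : ∀ q > 0, f q = g q⁻¹)
    (hg : Tendsto g (𝓝[>] 0) (𝓝 L)) : Tendsto f atTop (𝓝 L) :=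
  (hg.comp tendsto_inv_atTop_nhdsGT_zero).congr' <| by
    filter_upwards [eventually_gt_atTop 0] with q hq using (hfg q hq).symm

theorem exists_tendsto_rpow_mul_braceR_natCast_nhdsGT_zero (h x : ℝ) (n : ℕ) :
    ∃ L, Tendsto (fun q => q ^ (-(n : ℝ) / 2) * braceR q h x n) (𝓝[>] 0) (𝓝 L) := by
  set g := fun q : ℝ =>
    (-(√h)⁻¹) ^ n * ∏ l ∈ range n, (1 - q ^ l * (h * x)) / (1 - q ^ (l + 1) * x)
  have hg : ContinuousAt g 0 := by fun_prop (disch := simp)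
  refine ⟨g 0, (hg.tendsto.mono_left nhdsWithin_le_nhds).congr' ?_⟩
  filter_upwards [self_mem_nhdsWithin] with q hq
  rw [braceR_natCast, ← mul_assoc, rpow_neg_half_mul_neg_sqrt_div_pow hq]

theorem exists_tendsto_rpow_natAbs_mul_braceR_nhdsGT_zero {h x : ℝ} (hh : h ≠ 0) (hx : x ≠ 0)
    (d : ℤ) :
    ∃ L, Tendsto (fun q => q ^ (-(d.natAbs : ℝ) / 2) * braceR q h x d) (𝓝[>] 0) (𝓝 L) := by
  obtain ⟨n, rfl | rfl⟩ := d.eq_nat_or_neg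
  · simpa using exists_tendsto_rpow_mul_braceR_natCast_nhdsGT_zero h x n
  · obtain ⟨L, hL⟩ := exists_tendsto_rpow_mul_braceR_natCast_nhdsGT_zero h (h * x)⁻¹ n
    refine ⟨L, hL.congr' ?_⟩
    filter_upwards [self_mem_nhdsWithin] with q hq
    rw [Int.natAbs_neg, Int.natAbs_natCast, braceR_neg_natCast hq.ne' hh hx]

theorem exists_tendsto_rpow_natAbs_mul_braceR_atTop {h x : ℝ} (hh : h ≠ 0) (hx : x ≠ 0)
    (d : ℤ) :
    ∃ L, Tendsto (fun q => q ^ ((d.natAbs : ℝ) / 2) * braceR q h x d) atTop (𝓝 L) := by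
  obtain ⟨L, hL⟩ :=
    exists_tendsto_rpow_natAbs_mul_braceR_nhdsGT_zero (inv_ne_zero hh) (mul_ne_zero hh hx) (-d)
  refine ⟨L, tendsto_atTop_of_tendsto_comp_inv (fun q hq => ?_) hL⟩
  rw [Int.natAbs_neg, braceR_eq_inv_neg hq.ne' hh, Real.inv_rpow hq.le, ← Real.rpow_neg hq.le,
    neg_div, neg_neg]

theorem exists_tendsto_rpow_mul_braceR_nhdsGT_zero {h x : ℝ} (hh : h ≠ 0) (hx : x ≠ 0)
    (d : ℤ) :
    ∃ L, Tendsto (fun q => q ^ (-(d : ℝ) / 2) * braceR q h x d) (𝓝[>] 0) (𝓝 L) := by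
  obtain ⟨L, hL⟩ := exists_tendsto_rpow_natAbs_mul_braceR_nhdsGT_zero hh hx d
  have hc : 0 ≤ ((d.natAbs : ℝ) - d) / 2 := by
    rw [Nat.cast_natAbs, Int.cast_abs]
    linarith [le_abs_self (d : ℝ)]
  have hpow := (Real.continuousAt_rpow_const 0 _ (Or.inr hc)).tendsto.mono_left
    (nhdsWithin_le_nhds (s := Set.Ioi 0))
  refine ⟨_, (hpow.mul hL).congr' ?_⟩
  filter_upwards [self_mem_nhdsWithin] with q hq
  rw [← mul_assoc, ← Real.rpow_add hq]
  ring_nf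

theorem exists_tendsto_rpow_mul_braceR_atTop {h x : ℝ} (hh : h ≠ 0) (hx : x ≠ 0) (d : ℤ) :
    ∃ L, Tendsto (fun q => q ^ (-(d : ℝ) / 2) * braceR q h x d) atTop (𝓝 L) := by
  obtain ⟨L, hL⟩ :=
    exists_tendsto_rpow_mul_braceR_nhdsGT_zero (inv_ne_zero hh) (mul_ne_zero hh hx) (-d)
  refine ⟨L, tendsto_atTop_of_tendsto_comp_inv (fun q hq => ?_) hL⟩
  rw [braceR_eq_inv_neg hq.ne' hh, Real.inv_rpow hq.le, ← Real.rpow_neg hq.le, Int.cast_neg,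
    neg_neg, neg_div]

theorem rpow_neg_sum_div_two_mul_prod {ι : Type*} (s : Finset ι) {q : ℝ} (hq : 0 < q)
    (D : ι → ℤ) (f : ι → ℝ) :
    q ^ ((-(∑ i ∈ s, D i : ℤ) : ℝ) / 2) * ∏ i ∈ s, f i =
      ∏ i ∈ s, q ^ (-(D i : ℝ) / 2) * f i := by
  rw [prod_mul_distrib, ← Real.rpow_sum_of_pos hq, ← sum_div, sum_neg_distrib]
  push_cast
  rfl

/-- `q^{-|d|/2}{x}_d` has a limit as `q → 0⁺` and `q^{|d|/2}{x}_d` has a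
limit as `q → +∞`; consequently `q^{-(1/2)ΣᵢDᵢ} ∏ᵢ {xᵢ}_{Dᵢ}` has finite limits as
`q → 0⁺` and `q → +∞`. -/
theorem stmt_6 (x hbar : ℝ) (hx : 0 < x) (hh : 0 < hbar) (d : ℤ) :
    (∃ L : ℝ, Tendsto (fun q : ℝ => q ^ (-(d.natAbs : ℝ) / 2) * braceR q hbar x d)
      (nhdsWithin 0 (Set.Ioi 0)) (nhds L)) ∧
    (∃ L : ℝ, Tendsto (fun q : ℝ => q ^ ((d.natAbs : ℝ) / 2) * braceR q hbar x d)
      atTop (nhds L)) ∧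
    (∀ (n : ℕ) (xs : Fin n → ℝ) (D : Fin n → ℤ), (∀ i, 0 < xs i) →
      (∃ L : ℝ, Tendsto
        (fun q : ℝ => q ^ ((-(∑ i, D i : ℤ) : ℝ) / 2) * ∏ i, braceR q hbar (xs i) (D i))
        (nhdsWithin 0 (Set.Ioi 0)) (nhds L)) ∧
      (∃ L : ℝ, Tendsto
        (fun q : ℝ => q ^ ((-(∑ i, D i : ℤ) : ℝ) / 2) * ∏ i, braceR q hbar (xs i) (D i))
        atTop (nhds L))) := by
  refine ⟨exists_tendsto_rpow_natAbs_mul_braceR_nhdsGT_zero hh.ne' hx.ne' d,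
    exists_tendsto_rpow_natAbs_mul_braceR_atTop hh.ne' hx.ne' d, fun n xs D hxs => ?_⟩
  choose L₀ hL₀ using fun i ↦
    exists_tendsto_rpow_mul_braceR_nhdsGT_zero hh.ne' (hxs i).ne' (D i)
  choose L₁ hL₁ using fun i ↦ exists_tendsto_rpow_mul_braceR_atTop hh.ne' (hxs i).ne' (D i)
  refine ⟨⟨∏ i, L₀ i, (tendsto_finsetProd _ fun i _ => hL₀ i).congr' ?_⟩,
    ⟨∏ i, L₁ i, (tendsto_finsetProd _ fun i _ => hL₁ i).congr' ?_⟩⟩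
  · filter_upwards [self_mem_nhdsWithin] with q hq
    exact (rpow_neg_sum_div_two_mul_prod _ hq D _).symm
  · filter_upwards [eventually_gt_atTop 0] with q hq
    exact (rpow_neg_sum_div_two_mul_prod _ hq D _).symm

end
end

section
/- Let 0 → ℚ^k →^ι ℚ^n →^β ℚ^d → 0 be a short exact sequence (ι injective, β surjective, range ι = ker β), let θ̃, σ̃ ∈ ℚ^n, and let p ⊆ {1,…,n} with |p| = d be a vertex, i.e. (β(e_i))_{i∈p} is a basis of ℚ^d. Define: v_p ∈ (ℚ^d)^* the unique functional with v_p(β e_i) = −θ̃_i for all i ∈ p; for i ∈ p, w_i ∈ (ℚ^d)^* the dual basis functionals, w_i(β e_l) = δ_{il} for l ∈ p; A_p^+ := {j ∉ p : v_p(β e_j) > −θ̃_j}, A_p^− := {j ∉ p : v_p(β e_j) < −θ̃_j}; p^+ := {i ∈ p : w_i(β σ̃) > 0}, p^− := {i ∈ p : w_i(β σ̃) < 0}. Assume genericity: v_p(β e_j) ≠ −θ̃_j for all j ∉ p, and w_i(β σ̃) ≠ 0 for all i ∈ p. On the mirror side let p′ := {1,…,n}∖p (a vertex of the dual arrangement by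 Gale duality) and define: v′ ∈ ℚ^k the unique vector with (ι v′)_j = σ̃_j for all j ∈ p′; for j ∈ p′, c_j ∈ ℚ^k the dual basis vectors characterized by (ι c_j)_l = δ_{jl} for l ∈ p′; A_{p′}^+ := {i ∈ p : (ι v′)_i > σ̃_i}, A_{p′}^− := {i ∈ p : (ι v′)_i < σ̃_i}; (p′)^+ := {j ∈ p′ : −Σ_{i=1}^n θ̃_i (ι c_j)_i > 0}, (p′)^− := {j ∈ p′ : −Σ_{i=1}^n θ̃_i (ι c_j)_i < 0}. Then A_{p′}^+ = p^−, A_{p′}^− = p^+, (p′)^+ = A_p^−, and (p′)^− = A_p^+. -/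
open Finset

lemma aux_beta (n d : ℕ) (β : (Fin n → ℚ) →ₗ[ℚ] (Fin d → ℚ)) (x : Fin n → ℚ) :
    β x = ∑ l, x l • β (Pi.single l 1) := by
  conv_lhs => rw [← Finset.univ_sum_single x]
  rw [map_sum]
  refine Finset.sum_congr rfl fun l _ => ?_
  rw [← map_smul]
  congr 1
  rw [← Pi.single_smul, smul_eq_mul, mul_one]

/-- under 3d mirror symmetry (θ̃′ = −σ̃, σ̃′ = −θ̃) the splittings attached
to a vertex `p` and to the complementary mirror vertex `p′` are exchanged with signs
reversed: `A_{p′}⁺ = p⁻`, `A_{p′}⁻ = p⁺`, `(p′)⁺ = A_p⁻`, `(p′)⁻ = A_p⁺`. -/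
theorem stmt_9 (k n d : ℕ)
    (ι : (Fin k → ℚ) →ₗ[ℚ] (Fin n → ℚ)) (β : (Fin n → ℚ) →ₗ[ℚ] (Fin d → ℚ))
    (hι : Function.Injective ι) (hβ : Function.Surjective β)
    (hexact : LinearMap.range ι = LinearMap.ker β)
    (θ σ : Fin n → ℚ) (p : Finset (Fin n)) (hp : p.card = d)
    (hbasis : LinearIndependent ℚ (fun i : p => β (Pi.single (i : Fin n) 1)) ∧
      Submodule.span ℚ (Set.range fun i : p => β (Pi.single (i : Fin n) 1)) = ⊤)
    (v : Module.Dual ℚ (Fin d → ℚ))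
    (hv : ∀ i ∈ p, v (β (Pi.single i 1)) = -θ i)
    (w : Fin n → Module.Dual ℚ (Fin d → ℚ))
    (hw : ∀ i ∈ p, ∀ l ∈ p, w i (β (Pi.single l 1)) = if i = l then 1 else 0)
    (v' : Fin k → ℚ) (hv' : ∀ j, j ∉ p → ι v' j = σ j)
    (c : Fin n → Fin k → ℚ)
    (hc : ∀ j, j ∉ p → ∀ l, l ∉ p → ι (c j) l = if j = l then 1 else 0)
    (hgenθ : ∀ j, j ∉ p → v (β (Pi.single j 1)) ≠ -θ j)
    (hgenσ : ∀ i ∈ p, w i (β σ) ≠ 0) :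
    -- A_{p′}⁺ = p⁻ :
    {i : Fin n | i ∈ p ∧ σ i < ι v' i} = {i : Fin n | i ∈ p ∧ w i (β σ) < 0} ∧
    -- A_{p′}⁻ = p⁺ :
    {i : Fin n | i ∈ p ∧ ι v' i < σ i} = {i : Fin n | i ∈ p ∧ 0 < w i (β σ)} ∧
    -- (p′)⁺ = A_p⁻ :
    {j : Fin n | j ∉ p ∧ 0 < -(∑ i, θ i * ι (c j) i)}
      = {j : Fin n | j ∉ p ∧ v (β (Pi.single j 1)) < -θ j} ∧
    -- (p′)⁻ = A_p⁺ :
    {j : Fin n | j ∉ p ∧ -(∑ i, θ i * ι (c j) i) < 0}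
      = {j : Fin n | j ∉ p ∧ -θ j < v (β (Pi.single j 1))} := by
  have hker : ∀ y, β (ι y) = 0 := fun y => by
    have : ι y ∈ LinearMap.ker β := hexact ▸ LinearMap.mem_range_self ι y
    exact this
  have key1 : ∀ i ∈ p, w i (β σ) = σ i - ι v' i := by
    intro i hi
    have hβσ : β σ = β (σ - ι v') := by rw [map_sub, hker, sub_zero]
    rw [hβσ, aux_beta, map_sum]
    simp only [map_smul, smul_eq_mul]
    rw [Finset.sum_eq_single i]
    · rw [hw i hi i hi, if_pos rfl, mul_one, Pi.sub_apply]
    · intro l _ hl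
      by_cases hlp : l ∈ p
      · rw [hw i hi l hlp, if_neg (fun h => hl h.symm), mul_zero]
      · simp [Pi.sub_apply, hv' l hlp]
    · intro h; exact absurd (Finset.mem_univ i) h
  have key2 : ∀ j, j ∉ p → ∑ i, θ i * ι (c j) i = v (β (Pi.single j 1)) + θ j := by
    intro j hj
    have hker' : β (ι (c j)) = 0 := hker _
    have hsum0 : ∑ l, ι (c j) l * v (β (Pi.single l 1)) = 0 := by
      have h2 := congrArg v (aux_beta n d β (ι (c j)))
      rw [hker', map_zero, map_sum] at h2
      simp only [map_smul, smul_eq_mul] at h2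
      exact h2.symm
    have hsplit : ∀ (f : Fin n → ℚ), ∑ l, f l = ∑ l ∈ p, f l + ∑ l ∈ pᶜ, f l :=
      fun f => (Finset.sum_add_sum_compl p f).symm
    have hcomp : ∀ (g : Fin n → ℚ), (∀ l ∉ p, l ≠ j → g l = 0) → ∑ l ∈ pᶜ, g l = g j := by
      intro g hg
      apply Finset.sum_eq_single j
      · intro l hl hlj; exact hg l (Finset.mem_compl.mp hl) hlj
      · intro h; exact absurd (Finset.mem_compl.mpr hj) h
    have h1 : ∑ l ∈ p, ι (c j) l * v (β (Pi.single l 1)) + v (β (Pi.single j 1)) = 0 := by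
      rw [hsplit] at hsum0
      rw [← hsum0]
      congr 1
      rw [hcomp _ (fun l hl hlj => by
            rw [hc j hj l hl, if_neg (fun h => hlj h.symm), zero_mul]),
          hc j hj j hj, if_pos rfl, one_mul]
    have h2 : ∑ i, θ i * ι (c j) i = ∑ l ∈ p, θ l * ι (c j) l + θ j := by
      rw [hsplit]
      congr 1
      rw [hcomp _ (fun l hl hlj => by
            rw [hc j hj l hl, if_neg (fun h => hlj h.symm), mul_zero]),
          hc j hj j hj, if_pos rfl, mul_one]
    have h3 : ∑ l ∈ p, θ l * ι (c j) l = v (β (Pi.single j 1)) := by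
      have he : ∑ l ∈ p, ι (c j) l * v (β (Pi.single l 1))
          = ∑ l ∈ p, -(θ l * ι (c j) l) := by
        refine Finset.sum_congr rfl fun l hl => ?_
        rw [hv l hl]; ring
      rw [he, Finset.sum_neg_distrib] at h1
      linarith
    rw [h2, h3]
  refine ⟨?_, ?_, ?_, ?_⟩
  · ext i
    simp only [Set.mem_setOf_eq]
    constructor <;> rintro ⟨h1, h2⟩ <;> refine ⟨h1, ?_⟩ <;>
      have := key1 i h1 <;> linarith
  · ext i
    simp only [Set.mem_setOf_eq]
    constructor <;> rintro ⟨h1, h2⟩ <;> refine ⟨h1, ?_⟩ <;>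
      have := key1 i h1 <;> linarith
  · ext j
    simp only [Set.mem_setOf_eq]
    constructor <;> rintro ⟨h1, h2⟩ <;> refine ⟨h1, ?_⟩ <;>
      have := key2 j h1 <;> linarith
  · ext j
    simp only [Set.mem_setOf_eq]
    constructor <;> rintro ⟨h1, h2⟩ <;> refine ⟨h1, ?_⟩ <;>
      have := key2 j h1 <;> linarith
end

section
/- Let R be a unital (possibly noncommutative) ring, ħ ∈ R a central element, S = S⁺ ⊔ S⁻ a finite index set, and for each i ∈ S elements Z_i, A_i, ζ_i ∈ R with each A_i and each ζ_i invertible, satisfying: the Z_i commute pairwise; the A_i commute pairwise; the ζ_i commute pairwise; Z_i A_j = A_j Z_i for all i, j; A_i ζ_j = ζ_j A_i for all i, j; Z_i ζ_j = ζ_j Z_i whenever i ≠ j; (1 − Z_i) A_i = ζ_i (1 − ħ Z_i) for every i ∈ S; and ∏_{i∈S⁺} A_i = ∏_{i∈S⁻} A_i. Then ∏_{i∈S⁺}(1 − Z_i) · ∏_{i∈S⁻}(1 − ħ Z_i) = (∏_{i∈S⁺} ζ_i)(∏_{i∈S⁻} ζ_i^{−1}) · ∏_{i∈S⁺}(1 −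 ħ Z_i) · ∏_{i∈S⁻}(1 − Z_i). -/
/-- ordered product of `f` over a finite set (the factors used below pairwise commute,
so the choice of enumeration order is immaterial for the truth of the statement). -/
noncomputable def listProd {R : Type*} [Ring R] {ι : Type*} (s : Finset ι) (f : ι → R) : R :=
  (s.toList.map f).prod

section Aux
variable {R : Type*} [Ring R] {ι : Type*}

lemma aux_key (hbar : R) (hcentral : ∀ r : R, hbar * r = r * hbar)
    (Z : ι → R) (A ζ : ι → Rˣ)
    (hZA : ∀ i j, Z i * A j = (A j : R) * Z i)
    (hZζ : ∀ i j, i ≠ j → Z i * ζ j = (ζ j : R) * Z i)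
    (hrel : ∀ i, (1 - Z i) * A i = (ζ i : R) * (1 - hbar * Z i)) :
    ∀ l : List ι, l.Nodup →
      (l.map (fun i => 1 - Z i)).prod * (l.map (fun i => (A i : R))).prod
        = (l.map (fun i => (ζ i : R))).prod * (l.map (fun i => 1 - hbar * Z i)).prod := by
  intro l hl
  induction l with
  | nil => simp
  | cons a t ih =>
    obtain ⟨ha, ht⟩ := List.nodup_cons.mp hl
    have ih' := ih ht
    simp only [List.map_cons, List.prod_cons]
    have c1 : Commute ((A a : R)) ((t.map (fun i => 1 - Z i)).prod) := by
      refine Commute.list_prod_right _ _ (fun y hy => ?_)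
      obtain ⟨i, hi, rfl⟩ := List.mem_map.mp hy
      exact (Commute.one_right _).sub_right ((hZA i a).symm)
    have c2 : Commute ((1 : R) - hbar * Z a) ((t.map (fun i => (ζ i : R))).prod) := by
      refine Commute.list_prod_right _ _ (fun y hy => ?_)
      obtain ⟨i, hi, rfl⟩ := List.mem_map.mp hy
      have hne : a ≠ i := fun h => ha (h ▸ hi)
      have h1 : Commute hbar ((ζ i : R)) := hcentral _
      have h2 : Commute (Z a) ((ζ i : R)) := hZζ a i hne
      exact (Commute.one_left _).sub_left (h1.mul_left h2)
    calc (1 - Z a) * (t.map (fun i => 1 - Z i)).prod * ((A a : R) * (t.map (fun i => (A i : R))).prod)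
        = (1 - Z a) * ((t.map (fun i => 1 - Z i)).prod * (A a : R)) * (t.map (fun i => (A i : R))).prod := by
          rw [mul_assoc, mul_assoc, mul_assoc]
      _ = ((1 - Z a) * (A a : R)) * ((t.map (fun i => 1 - Z i)).prod * (t.map (fun i => (A i : R))).prod) := by
          rw [c1.symm.eq]; rw [mul_assoc, mul_assoc, mul_assoc]
      _ = ((ζ a : R) * (1 - hbar * Z a)) * ((t.map (fun i => (ζ i : R))).prod * (t.map (fun i => 1 - hbar * Z i)).prod) := by
          rw [hrel a, ih']
      _ = (ζ a : R) * ((1 - hbar * Z a) * (t.map (fun i => (ζ i : R))).prod) * (t.map (fun i => 1 - hbar * Z i)).prod := by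
          rw [mul_assoc, mul_assoc, mul_assoc]
      _ = (ζ a : R) * (t.map (fun i => (ζ i : R))).prod * ((1 - hbar * Z a) * (t.map (fun i => 1 - hbar * Z i)).prod) := by
          rw [c2.eq]; rw [mul_assoc, mul_assoc, mul_assoc]

lemma aux_inv_prod (ζ : ι → Rˣ) (hζζ : ∀ i j, (ζ i : R) * ζ j = (ζ j : R) * ζ i) :
    ∀ l : List ι,
      (l.map (fun i => (((ζ i)⁻¹ : Rˣ) : R))).prod * (l.map (fun i => (ζ i : R))).prod = 1 := by
  intro l
  induction l with
  | nil => simp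
  | cons a t ih =>
    simp only [List.map_cons, List.prod_cons]
    have c : Commute ((t.map (fun i => (((ζ i)⁻¹ : Rˣ) : R))).prod) ((ζ a : R)) := by
      refine Commute.list_prod_left _ _ (fun y hy => ?_)
      obtain ⟨i, hi, rfl⟩ := List.mem_map.mp hy
      have h1 : Commute ((ζ i : R)) ((ζ a : R)) := hζζ i a
      exact h1.units_inv_left
    calc (((ζ a)⁻¹ : Rˣ) : R) * (t.map (fun i => (((ζ i)⁻¹ : Rˣ) : R))).prod * ((ζ a : R) * (t.map (fun i => (ζ i : R))).prod)
        = (((ζ a)⁻¹ : Rˣ) : R) * ((t.map (fun i => (((ζ i)⁻¹ : Rˣ) : R))).prod * (ζ a : R)) * (t.map (fun i => (ζ i : R))).prod := by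
          rw [mul_assoc, mul_assoc, mul_assoc]
      _ = ((((ζ a)⁻¹ : Rˣ) : R) * (ζ a : R)) * ((t.map (fun i => (((ζ i)⁻¹ : Rˣ) : R))).prod * (t.map (fun i => (ζ i : R))).prod) := by
          rw [c.eq]; rw [mul_assoc, mul_assoc, mul_assoc]
      _ = 1 := by rw [ih, Units.inv_mul]; simp

end Aux

lemma aux_coe_prod {R : Type*} [Ring R] {ι : Type*} (f : ι → Rˣ) :
    ∀ l : List ι, (((l.map f).prod : Rˣ) : R) = (l.map (fun i => (f i : R))).prod := by
  intro l
  induction l with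
  | nil => simp
  | cons a t ih => simp [ih]

/-- the q-difference-operator identity
`∏_{S⁺}(1−Zᵢ)·∏_{S⁻}(1−ħZᵢ) = (∏_{S⁺}ζᵢ)(∏_{S⁻}ζᵢ⁻¹)·∏_{S⁺}(1−ħZᵢ)·∏_{S⁻}(1−Zᵢ)`
in a noncommutative ring, given the commutation relations and
`(1−Zᵢ)Aᵢ = ζᵢ(1−ħZᵢ)`, `∏_{S⁺}Aᵢ = ∏_{S⁻}Aᵢ`. -/
theorem stmt_10 {R : Type*} [Ring R] {ι : Type*} [Fintype ι] [DecidableEq ι]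
    (Splus Sminus : Finset ι) (hdisj : Disjoint Splus Sminus)
    (hunion : Splus ∪ Sminus = Finset.univ)
    (hbar : R) (hcentral : ∀ r : R, hbar * r = r * hbar)
    (Z : ι → R) (A ζ : ι → Rˣ)
    (hZZ : ∀ i j, Z i * Z j = Z j * Z i)
    (hAA : ∀ i j, (A i : R) * A j = (A j : R) * A i)
    (hζζ : ∀ i j, (ζ i : R) * ζ j = (ζ j : R) * ζ i)
    (hZA : ∀ i j, Z i * A j = (A j : R) * Z i)
    (hAζ : ∀ i j, (A i : R) * ζ j = (ζ j : R) * A i)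
    (hZζ : ∀ i j, i ≠ j → Z i * ζ j = (ζ j : R) * Z i)
    (hrel : ∀ i, (1 - Z i) * A i = (ζ i : R) * (1 - hbar * Z i))
    (hcirc : listProd Splus (fun i => (A i : R)) = listProd Sminus (fun i => (A i : R))) :
    listProd Splus (fun i => 1 - Z i) * listProd Sminus (fun i => 1 - hbar * Z i)
      = (listProd Splus (fun i => (ζ i : R)) * listProd Sminus (fun i => (((ζ i)⁻¹ : Rˣ) : R)))
        * (listProd Splus (fun i => 1 - hbar * Z i) * listProd Sminus (fun i => 1 - Z i)) := by
  classical
  set lp := Splus.toList with hlp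
  set lm := Sminus.toList with hlm
  set P1p := (lp.map (fun i => 1 - Z i)).prod with hP1p
  set P1m := (lm.map (fun i => 1 - Z i)).prod with hP1m
  set Hp := (lp.map (fun i => 1 - hbar * Z i)).prod with hHp
  set Hm := (lm.map (fun i => 1 - hbar * Z i)).prod with hHm
  set ζp := (lp.map (fun i => (ζ i : R))).prod with hζp
  set ζm := (lm.map (fun i => (ζ i : R))).prod with hζm
  set ζmInv := (lm.map (fun i => (((ζ i)⁻¹ : Rˣ) : R))).prod with hζmInv
  set PAp := (lp.map (fun i => (A i : R))).prod with hPAp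
  set PAm := (lm.map (fun i => (A i : R))).prod with hPAm
  have hkeyp := aux_key hbar hcentral Z A ζ hZA hZζ hrel lp (Finset.nodup_toList _)
  have hkeym := aux_key hbar hcentral Z A ζ hZA hZζ hrel lm (Finset.nodup_toList _)
  have hinv := aux_inv_prod ζ hζζ lm
  -- Hm commutes with PAp
  have cHA : Commute Hm PAp := by
    refine Commute.list_prod_right _ _ (fun y hy => ?_)
    obtain ⟨j, hj, rfl⟩ := List.mem_map.mp hy
    refine Commute.list_prod_left _ _ (fun x hx => ?_)
    obtain ⟨i, hi, rfl⟩ := List.mem_map.mp hx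
    have h1 : Commute hbar ((A j : R)) := hcentral _
    have h2 : Commute (Z i) ((A j : R)) := hZA i j
    exact (Commute.one_left _).sub_left (h1.mul_left h2)
  -- ζm commutes with Hp (indices disjoint)
  have cζH : Commute ζm Hp := by
    refine Commute.list_prod_right _ _ (fun y hy => ?_)
    obtain ⟨i, hi, rfl⟩ := List.mem_map.mp hy
    refine Commute.list_prod_left _ _ (fun x hx => ?_)
    obtain ⟨j, hj, rfl⟩ := List.mem_map.mp hx
    have hne : i ≠ j := fun h =>
      Finset.disjoint_left.mp hdisj (Finset.mem_toList.mp hi)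
        (h.symm ▸ Finset.mem_toList.mp hj)
    have h1 : Commute hbar ((ζ j : R)) := hcentral _
    have h2 : Commute (Z i) ((ζ j : R)) := hZζ i j hne
    exact ((Commute.one_left _).sub_left (h1.mul_left h2)).symm
  have hL : P1p * Hm * PAp = ζp * (Hp * Hm) := by
    calc P1p * Hm * PAp = P1p * (Hm * PAp) := mul_assoc _ _ _
      _ = P1p * (PAp * Hm) := by rw [cHA.eq]
      _ = (P1p * PAp) * Hm := (mul_assoc _ _ _).symm
      _ = (ζp * Hp) * Hm := by rw [hkeyp]
      _ = ζp * (Hp * Hm) := mul_assoc _ _ _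
  have hR : (ζp * ζmInv) * (Hp * P1m) * PAm = ζp * (Hp * Hm) := by
    calc (ζp * ζmInv) * (Hp * P1m) * PAm
        = ζp * (ζmInv * (Hp * (P1m * PAm))) := by simp only [mul_assoc]
      _ = ζp * (ζmInv * (Hp * (ζm * Hm))) := by rw [hkeym]
      _ = ζp * (ζmInv * ((Hp * ζm) * Hm)) := by rw [mul_assoc Hp]
      _ = ζp * (ζmInv * ((ζm * Hp) * Hm)) := by rw [cζH.eq]
      _ = ζp * ((ζmInv * ζm) * (Hp * Hm)) := by simp only [mul_assoc]
      _ = ζp * (Hp * Hm) := by rw [hinv, one_mul]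
  set U : Rˣ := (lp.map A).prod with hUdef
  have hU : (U : R) = PAp := by rw [hUdef, aux_coe_prod, hPAp]
  have hU' : (U : R) = PAm := by
    rw [hU]
    exact hcirc
  have h1 : (P1p * Hm) * (U : R) = ζp * (Hp * Hm) := by rw [hU]; exact hL
  have h2 : ((ζp * ζmInv) * (Hp * P1m)) * (U : R) = ζp * (Hp * Hm) := by rw [hU']; exact hR
  show P1p * Hm = (ζp * ζmInv) * (Hp * P1m)
  calc P1p * Hm = (P1p * Hm) * (U : R) * ((U⁻¹ : Rˣ) : R) :=
        (Units.mul_inv_cancel_right _ _).symm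
    _ = ((ζp * ζmInv) * (Hp * P1m)) * (U : R) * ((U⁻¹ : Rˣ) : R) := by rw [h1, h2]
    _ = (ζp * ζmInv) * (Hp * P1m) := Units.mul_inv_cancel_right _ _
end

section
/- Fix 0 < q < 1 and hypertoric data: a short exact sequence 0 → ℤ^k →^ι ℤ^n →^β ℤ^d → 0 with generic stability θ̃ and chamber σ̃, so every vertex r ⊆ {1,…,n} (|r| = d, (β e_i)_{i∈r} a basis) carries a standard r-frame matrix C(r) = (C(r)_{ij})_{i∈r, j∉r}, splittings r = r⁺ ⊔ r⁻ and A_r = A_r⁺ ⊔ A_r⁻. For positive real parameters ħ, a_1,…,a_n, z_1,…,z_n define: ϑ(x) := (√x − 1/√x) ∏_{m=1}^∞ (1 − q^m x)(1 − q^m x^{−1}) for x > 0; the restrictions x_j|_r := 1 (j ∈ A_r⁺), ħ^{−1} (j ∈ A_r⁻), a_j ∏_{l∉r} a_l^{−C(r)_{jl}} ħ^{−Σ_{l∈A_r⁻} C(r)_{jl}} (j ∈ r); the Kähler monomials ζ_j(r) := z_j ∏_{i∈r} z_i^{C(r)_{ij}} and c_j(r) := Σ_{i∈r⁺} C(r)_{ij};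 and the restricted elliptic stable envelope Stab_σ(r)|_{r″} := ∏_{i∈r⁺} ϑ(ħ · x_i|_{r″}) ∏_{i∈r⁻} ϑ(x_i|_{r″}) ∏_{j∈A_r⁺} ϑ(x_j|_{r″} ζ_j(r) ħ^{−c_j(r)})/ϑ(ζ_j(r) ħ^{−c_j(r)}) ∏_{j∈A_r⁻} ϑ(x_j|_{r″} ζ_j(r) ħ^{−c_j(r)})/ϑ(ħ^{−1} ζ_j(r) ħ^{−c_j(r)}) for any two vertices r, r″. Define the mirror data by the dual exact sequence with θ̃′ = −σ̃, σ̃′ = −θ̃, so that each vertex r corresponds to the complementary vertex r′ = {1,…,n}∖r with frame matrix C′(r′)_{ji} = −C(r)_{ij} and splittings (r′)^± = A_r^∓, A_{r′}^± = r^∓, and set the mirror parameters by the identification κ_Stab: a′_i := z_i, z′_i := a_i, ħ′ := ħ^{−1}, with Stab′_{σ′}(r′)|_{r″′} defined by the same formula from the mirror data. Then for any two vertices p, q (assuming all theta-factors appearing in denominators are nonzero): Stab_σ(p)|_q / Stab_σ(q)|_q = Stab′_{σ′}(q′)|_{p′} / Stab′_{σ′}(p′)|_{p′}. -/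
open Finset

noncomputable section

/-- the theta function `ϑ(x) = (√x − 1/√x) ∏_{m≥1} (1 − qᵐx)(1 − qᵐx⁻¹)` (for `x > 0`,
with the real square root). -/
def thetaR (q x : ℝ) : ℝ :=
  (Real.sqrt x - (Real.sqrt x)⁻¹) * ∏' m : ℕ, ((1 - q ^ (m + 1) * x) * (1 - q ^ (m + 1) * x⁻¹))

/-- the fixed-point restrictions `x_j|_r`: here `Ap, Am` are the splitting `A_r = A_r⁺ ⊔ A_r⁻`
of the complement of the vertex `r`, and `C` is the standard `r`-frame matrix:
`x_j|_r = 1` for `j ∈ A_r⁺`, `ħ⁻¹` for `j ∈ A_r⁻`, and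
`a_j ∏_{l∉r} a_l^{−C_{jl}} ħ^{−Σ_{l∈A_r⁻} C_{jl}}` for `j ∈ r`. -/
def xRestR (n : ℕ) (hbar : ℝ) (a : Fin n → ℝ) (Ap Am : Finset (Fin n))
    (C : Fin n → Fin n → ℤ) (j : Fin n) : ℝ :=
  if j ∈ Ap then 1
  else if j ∈ Am then hbar⁻¹
  else a j * (∏ l ∈ Ap ∪ Am, a l ^ (-(C j l))) * hbar ^ (-(∑ l ∈ Am, C j l))

/-- the Kähler monomials `ζ_j(r) = z_j ∏_{i∈r} z_i^{C_{ij}}`. -/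
def zetaR (n : ℕ) (z : Fin n → ℝ) (r : Finset (Fin n)) (C : Fin n → Fin n → ℤ)
    (j : Fin n) : ℝ :=
  z j * ∏ i ∈ r, z i ^ (C i j)

/-- the exponents `c_j(r) = Σ_{i∈r⁺} C_{ij}`. -/
def cExpR (n : ℕ) (rplus : Finset (Fin n)) (C : Fin n → Fin n → ℤ) (j : Fin n) : ℤ :=
  ∑ i ∈ rplus, C i j

/-- the restricted elliptic stable envelope
`Stab_σ(r)|_{r″} = ∏_{i∈r⁺}ϑ(ħ x_i|_{r″}) ∏_{i∈r⁻}ϑ(x_i|_{r″})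
 ∏_{j∈A_r⁺} ϑ(x_j|_{r″} ζ_j ħ^{−c_j})/ϑ(ζ_j ħ^{−c_j})
 ∏_{j∈A_r⁻} ϑ(x_j|_{r″} ζ_j ħ^{−c_j})/ϑ(ħ⁻¹ ζ_j ħ^{−c_j})`,
where `xr` is the restriction `x_·|_{r″}`, `ζ = ζ_·(r)` and `c = c_·(r)`. -/
def stabR (n : ℕ) (q hbar : ℝ) (rplus rminus Ap Am : Finset (Fin n))
    (xr ζ : Fin n → ℝ) (c : Fin n → ℤ) : ℝ :=
  (∏ i ∈ rplus, thetaR q (hbar * xr i)) * (∏ i ∈ rminus, thetaR q (xr i)) *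
  (∏ j ∈ Ap, thetaR q (xr j * (ζ j * hbar ^ (-(c j)))) / thetaR q (ζ j * hbar ^ (-(c j)))) *
  (∏ j ∈ Am, thetaR q (xr j * (ζ j * hbar ^ (-(c j)))) /
      thetaR q (hbar⁻¹ * (ζ j * hbar ^ (-(c j)))))

/-- the splitting `r⁺` determined by the chamber `σ̃`. -/
def rplusOf (n : ℕ) (σ : Fin n → ℤ) (r : Finset (Fin n)) (C : Fin n → Fin n → ℤ) :
    Finset (Fin n) :=
  r.filter fun i => 0 < σ i - ∑ j ∈ rᶜ, C i j * σ j

/-- the splitting `r⁻` determined by the chamber `σ̃`. -/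
def rminusOf (n : ℕ) (σ : Fin n → ℤ) (r : Finset (Fin n)) (C : Fin n → Fin n → ℤ) :
    Finset (Fin n) :=
  r.filter fun i => σ i - ∑ j ∈ rᶜ, C i j * σ j < 0

/-- the splitting `A_r⁺` determined by the stability `θ̃`. -/
def AplusOf (n : ℕ) (θ : Fin n → ℤ) (r : Finset (Fin n)) (C : Fin n → Fin n → ℤ) :
    Finset (Fin n) :=
  rᶜ.filter fun j => 0 < θ j + ∑ i ∈ r, C i j * θ i

/-- the splitting `A_r⁻` determined by the stability `θ̃`. -/
def AminusOf (n : ℕ) (θ : Fin n → ℤ) (r : Finset (Fin n)) (C : Fin n → Fin n → ℤ) :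
    Finset (Fin n) :=
  rᶜ.filter fun j => θ j + ∑ i ∈ r, C i j * θ i < 0

/-- the mirror frame matrix `C′(r′)_{ji} = −C(r)_{ij}`. -/
def Cmir (n : ℕ) (C : Fin n → Fin n → ℤ) : Fin n → Fin n → ℤ := fun j i => -(C i j)

/-- nonvanishing of the theta-factors appearing in the denominators of a `stabR`. -/
def denOK (n : ℕ) (q hbar : ℝ) (Ap Am : Finset (Fin n)) (ζ : Fin n → ℝ)
    (c : Fin n → ℤ) : Prop :=
  (∀ j ∈ Ap, thetaR q (ζ j * hbar ^ (-(c j))) ≠ 0) ∧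
    (∀ j ∈ Am, thetaR q (hbar⁻¹ * (ζ j * hbar ^ (-(c j)))) ≠ 0)

section AuxMirror

private lemma prod4R {n : ℕ} {S1 S2 S3 S4 : Finset (Fin n)} {g f1 f2 f3 f4 : Fin n → ℝ}
    (h12 : Disjoint S1 S2) (h3 : Disjoint (S1 ∪ S2) S3) (h4 : Disjoint (S1 ∪ S2 ∪ S3) S4)
    (hcov : S1 ∪ S2 ∪ S3 ∪ S4 = Finset.univ)
    (e1 : ∀ j ∈ S1, f1 j = g j) (e2 : ∀ j ∈ S2, f2 j = g j)
    (e3 : ∀ j ∈ S3, f3 j = g j) (e4 : ∀ j ∈ S4, f4 j = g j) :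
    (∏ j ∈ S1, f1 j) * (∏ j ∈ S2, f2 j) * (∏ j ∈ S3, f3 j) * (∏ j ∈ S4, f4 j)
      = ∏ j, g j := by
  rw [Finset.prod_congr rfl e1, Finset.prod_congr rfl e2, Finset.prod_congr rfl e3,
    Finset.prod_congr rfl e4, ← Finset.prod_union h12, ← Finset.prod_union h3,
    ← Finset.prod_union h4, hcov]

private lemma rpm_union (n : ℕ) (σ : Fin n → ℤ) (r : Finset (Fin n)) (C : Fin n → Fin n → ℤ)
    (h : ∀ i ∈ r, σ i - ∑ j ∈ rᶜ, C i j * σ j ≠ 0) :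
    rplusOf n σ r C ∪ rminusOf n σ r C = r := by
  ext i
  simp only [rplusOf, rminusOf, Finset.mem_union, Finset.mem_filter]
  constructor
  · rintro (⟨h1, _⟩ | ⟨h1, _⟩) <;> exact h1
  · intro hi
    rcases lt_or_gt_of_ne (h i hi) with h' | h'
    · exact Or.inr ⟨hi, h'⟩
    · exact Or.inl ⟨hi, h'⟩

private lemma rpm_disj (n : ℕ) (σ : Fin n → ℤ) (r : Finset (Fin n)) (C : Fin n → Fin n → ℤ) :
    Disjoint (rplusOf n σ r C) (rminusOf n σ r C) := by
  simp only [Finset.disjoint_left, rplusOf, rminusOf, Finset.mem_filter]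
  rintro i ⟨_, h1⟩ ⟨_, h2⟩
  omega

private lemma apm_union (n : ℕ) (θ : Fin n → ℤ) (r : Finset (Fin n)) (C : Fin n → Fin n → ℤ)
    (h : ∀ j ∈ rᶜ, θ j + ∑ i ∈ r, C i j * θ i ≠ 0) :
    AplusOf n θ r C ∪ AminusOf n θ r C = rᶜ := by
  ext i
  simp only [AplusOf, AminusOf, Finset.mem_union, Finset.mem_filter]
  constructor
  · rintro (⟨h1, _⟩ | ⟨h1, _⟩) <;> exact h1
  · intro hi
    rcases lt_or_gt_of_ne (h i hi) with h' | h'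
    · exact Or.inr ⟨hi, h'⟩
    · exact Or.inl ⟨hi, h'⟩

private lemma apm_disj (n : ℕ) (θ : Fin n → ℤ) (r : Finset (Fin n)) (C : Fin n → Fin n → ℤ) :
    Disjoint (AplusOf n θ r C) (AminusOf n θ r C) := by
  simp only [Finset.disjoint_left, AplusOf, AminusOf, Finset.mem_filter]
  rintro i ⟨_, h1⟩ ⟨_, h2⟩
  omega

end AuxMirror

/-- 3d mirror symmetry of elliptic stable envelopes for hypertoric
varieties: `Stab_σ(p)|_q / Stab_σ(q)|_q = Stab′_{σ′}(q′)|_{p′} / Stab′_{σ′}(p′)|_{p′}`,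
under `κ_Stab : a′ = z, z′ = a, ħ′ = ħ⁻¹`, `θ̃′ = −σ̃`, `σ̃′ = −θ̃`, `r′ = rᶜ`,
`C′_{ji} = −C_{ij}`, `(r′)^± = A_r^∓`, `A_{r′}^± = r^∓`. -/

theorem stmt_14 (q₀ : ℝ) (hq0 : 0 < q₀) (hq1 : q₀ < 1)
    (k d n : ℕ) (hkd : k + d = n)
    (ι : (Fin k → ℤ) →ₗ[ℤ] (Fin n → ℤ)) (β : (Fin n → ℤ) →ₗ[ℤ] (Fin d → ℤ))
    (hι : Function.Injective ι) (hβ : Function.Surjective β)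
    (hexact : LinearMap.range ι = LinearMap.ker β)
    (θ σ : Fin n → ℤ)
    (hbar : ℝ) (hh : 0 < hbar)
    (a z : Fin n → ℝ) (ha : ∀ i, 0 < a i) (hz : ∀ i, 0 < z i)
    (P Q : Finset (Fin n)) (hPcard : P.card = d) (hQcard : Q.card = d)
    (hPbasis : LinearIndependent ℤ (fun i : P => β (Pi.single (i : Fin n) 1)) ∧
      Submodule.span ℤ (Set.range fun i : P => β (Pi.single (i : Fin n) 1)) = ⊤)
    (hQbasis : LinearIndependent ℤ (fun i : Q => β (Pi.single (i : Fin n) 1)) ∧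
      Submodule.span ℤ (Set.range fun i : Q => β (Pi.single (i : Fin n) 1)) = ⊤)
    (CP CQ : Fin n → Fin n → ℤ)
    (hCP : ∀ j, j ∉ P → β (Pi.single j 1) = -∑ i ∈ P, CP i j • β (Pi.single i 1))
    (hCQ : ∀ j, j ∉ Q → β (Pi.single j 1) = -∑ i ∈ Q, CQ i j • β (Pi.single i 1))
    -- genericity of θ̃ and σ̃ at the two vertices
    (hgenPσ : ∀ i ∈ P, σ i - ∑ j ∈ Pᶜ, CP i j * σ j ≠ 0)
    (hgenPθ : ∀ j ∈ Pᶜ, θ j + ∑ i ∈ P, CP i j * θ i ≠ 0)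
    (hgenQσ : ∀ i ∈ Q, σ i - ∑ j ∈ Qᶜ, CQ i j * σ j ≠ 0)
    (hgenQθ : ∀ j ∈ Qᶜ, θ j + ∑ i ∈ Q, CQ i j * θ i ≠ 0)
    -- nonvanishing of all theta-factors appearing in denominators
    (hdenP : denOK n q₀ hbar (AplusOf n θ P CP) (AminusOf n θ P CP)
      (zetaR n z P CP) (cExpR n (rplusOf n σ P CP) CP))
    (hdenQ : denOK n q₀ hbar (AplusOf n θ Q CQ) (AminusOf n θ Q CQ)
      (zetaR n z Q CQ) (cExpR n (rplusOf n σ Q CQ) CQ))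
    (hdenQ' : denOK n q₀ hbar⁻¹ (rminusOf n σ Q CQ) (rplusOf n σ Q CQ)
      (zetaR n a Qᶜ (Cmir n CQ)) (cExpR n (AminusOf n θ Q CQ) (Cmir n CQ)))
    (hdenP' : denOK n q₀ hbar⁻¹ (rminusOf n σ P CP) (rplusOf n σ P CP)
      (zetaR n a Pᶜ (Cmir n CP)) (cExpR n (AminusOf n θ P CP) (Cmir n CP)))
    (hSQ : stabR n q₀ hbar (rplusOf n σ Q CQ) (rminusOf n σ Q CQ)
        (AplusOf n θ Q CQ) (AminusOf n θ Q CQ)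
        (xRestR n hbar a (AplusOf n θ Q CQ) (AminusOf n θ Q CQ) CQ)
        (zetaR n z Q CQ) (cExpR n (rplusOf n σ Q CQ) CQ) ≠ 0)
    (hSP' : stabR n q₀ hbar⁻¹ (AminusOf n θ P CP) (AplusOf n θ P CP)
        (rminusOf n σ P CP) (rplusOf n σ P CP)
        (xRestR n hbar⁻¹ z (rminusOf n σ P CP) (rplusOf n σ P CP) (Cmir n CP))
        (zetaR n a Pᶜ (Cmir n CP)) (cExpR n (AminusOf n θ P CP) (Cmir n CP)) ≠ 0) :
    -- Stab_σ(P)|_Q / Stab_σ(Q)|_Q = Stab′_{σ′}(Q′)|_{P′} / Stab′_{σ′}(P′)|_{P′}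
    stabR n q₀ hbar (rplusOf n σ P CP) (rminusOf n σ P CP)
        (AplusOf n θ P CP) (AminusOf n θ P CP)
        (xRestR n hbar a (AplusOf n θ Q CQ) (AminusOf n θ Q CQ) CQ)
        (zetaR n z P CP) (cExpR n (rplusOf n σ P CP) CP)
      / stabR n q₀ hbar (rplusOf n σ Q CQ) (rminusOf n σ Q CQ)
          (AplusOf n θ Q CQ) (AminusOf n θ Q CQ)
          (xRestR n hbar a (AplusOf n θ Q CQ) (AminusOf n θ Q CQ) CQ)
          (zetaR n z Q CQ) (cExpR n (rplusOf n σ Q CQ) CQ)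
      = stabR n q₀ hbar⁻¹ (AminusOf n θ Q CQ) (AplusOf n θ Q CQ)
          (rminusOf n σ Q CQ) (rplusOf n σ Q CQ)
          (xRestR n hbar⁻¹ z (rminusOf n σ P CP) (rplusOf n σ P CP) (Cmir n CP))
          (zetaR n a Qᶜ (Cmir n CQ)) (cExpR n (AminusOf n θ Q CQ) (Cmir n CQ))
        / stabR n q₀ hbar⁻¹ (AminusOf n θ P CP) (AplusOf n θ P CP)
            (rminusOf n σ P CP) (rplusOf n σ P CP)
            (xRestR n hbar⁻¹ z (rminusOf n σ P CP) (rplusOf n σ P CP) (Cmir n CP))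
            (zetaR n a Pᶜ (Cmir n CP)) (cExpR n (AminusOf n θ P CP) (Cmir n CP)) := by
  classical
  set Pp := rplusOf n σ P CP with hPpdef
  set Pm := rminusOf n σ P CP with hPmdef
  set APp := AplusOf n θ P CP with hAPpdef
  set APm := AminusOf n θ P CP with hAPmdef
  set Qp := rplusOf n σ Q CQ with hQpdef
  set Qm := rminusOf n σ Q CQ with hQmdef
  set AQp := AplusOf n θ Q CQ with hAQpdef
  set AQm := AminusOf n θ Q CQ with hAQmdef
  set u := xRestR n hbar a AQp AQm CQ with hudef
  set x' := xRestR n hbar⁻¹ z Pm Pp (Cmir n CP) with hxdef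
  simp only [denOK] at hdenP hdenQ hdenQ' hdenP'
  obtain ⟨hdP1, hdP2⟩ := hdenP
  obtain ⟨hdQ1, hdQ2⟩ := hdenQ
  obtain ⟨hdQ'1, hdQ'2⟩ := hdenQ'
  obtain ⟨hdP'1, hdP'2⟩ := hdenP'
  -- basic partition facts
  have hPcov : Pp ∪ Pm = P := rpm_union n σ P CP hgenPσ
  have hQcov : Qp ∪ Qm = Q := rpm_union n σ Q CQ hgenQσ
  have hAPcov : APp ∪ APm = Pᶜ := apm_union n θ P CP hgenPθ
  have hAQcov : AQp ∪ AQm = Qᶜ := apm_union n θ Q CQ hgenQθ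
  have dPpPm : Disjoint Pp Pm := rpm_disj n σ P CP
  have dQpQm : Disjoint Qp Qm := rpm_disj n σ Q CQ
  have dAPpAPm : Disjoint APp APm := apm_disj n θ P CP
  have dAQpAQm : Disjoint AQp AQm := apm_disj n θ Q CQ
  have sPp : Pp ⊆ P := Finset.filter_subset _ _
  have sPm : Pm ⊆ P := Finset.filter_subset _ _
  have sAPp : APp ⊆ Pᶜ := Finset.filter_subset _ _
  have sAPm : APm ⊆ Pᶜ := Finset.filter_subset _ _
  have sQp : Qp ⊆ Q := Finset.filter_subset _ _
  have sQm : Qm ⊆ Q := Finset.filter_subset _ _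
  have sAQp : AQp ⊆ Qᶜ := Finset.filter_subset _ _
  have sAQm : AQm ⊆ Qᶜ := Finset.filter_subset _ _
  have dPc : Disjoint P (Pᶜ : Finset (Fin n)) := disjoint_compl_right
  have dQc : Disjoint Q (Qᶜ : Finset (Fin n)) := disjoint_compl_right
  have nm : ∀ {s t : Finset (Fin n)} {j : Fin n}, Disjoint s t → j ∈ s → j ∉ t :=
    fun hd hj => Finset.disjoint_left.mp hd hj
  have dPpAPp : Disjoint Pp APp := (dPc.mono_left sPp).mono_right sAPp
  have dPpAPm : Disjoint Pp APm := (dPc.mono_left sPp).mono_right sAPm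
  have dPmAPp : Disjoint Pm APp := (dPc.mono_left sPm).mono_right sAPp
  have dPmAPm : Disjoint Pm APm := (dPc.mono_left sPm).mono_right sAPm
  have dQpAQp : Disjoint Qp AQp := (dQc.mono_left sQp).mono_right sAQp
  have dQpAQm : Disjoint Qp AQm := (dQc.mono_left sQp).mono_right sAQm
  have dQmAQp : Disjoint Qm AQp := (dQc.mono_left sQm).mono_right sAQp
  have dQmAQm : Disjoint Qm AQm := (dQc.mono_left sQm).mono_right sAQm
  -- disjointness/coverage in the shapes needed for the four stable envelopes
  have dA3 : Disjoint (Pp ∪ Pm) APp := by rw [hPcov]; exact dPc.mono_right sAPp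
  have dA4 : Disjoint (Pp ∪ Pm ∪ APp) APm := by
    rw [hPcov]; exact Finset.disjoint_union_left.mpr ⟨dPc.mono_right sAPm, dAPpAPm⟩
  have covA : Pp ∪ Pm ∪ APp ∪ APm = Finset.univ := by
    rw [hPcov, Finset.union_assoc, hAPcov]; exact Finset.union_compl _
  have dB3 : Disjoint (Qp ∪ Qm) AQp := by rw [hQcov]; exact dQc.mono_right sAQp
  have dB4 : Disjoint (Qp ∪ Qm ∪ AQp) AQm := by
    rw [hQcov]; exact Finset.disjoint_union_left.mpr ⟨dQc.mono_right sAQm, dAQpAQm⟩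
  have covB : Qp ∪ Qm ∪ AQp ∪ AQm = Finset.univ := by
    rw [hQcov, Finset.union_assoc, hAQcov]; exact Finset.union_compl _
  have dC3 : Disjoint (AQm ∪ AQp) Qm := by
    rw [Finset.union_comm AQm AQp, hAQcov]; exact disjoint_compl_left.mono_right sQm
  have dC4 : Disjoint (AQm ∪ AQp ∪ Qm) Qp := by
    rw [Finset.union_comm AQm AQp, hAQcov]
    exact Finset.disjoint_union_left.mpr ⟨disjoint_compl_left.mono_right sQp, dQpQm.symm⟩
  have covC : AQm ∪ AQp ∪ Qm ∪ Qp = Finset.univ := by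
    rw [Finset.union_comm AQm AQp, hAQcov, Finset.union_assoc, Finset.union_comm Qm Qp,
      hQcov, Finset.union_comm]
    exact Finset.union_compl _
  have dD3 : Disjoint (APm ∪ APp) Pm := by
    rw [Finset.union_comm APm APp, hAPcov]; exact disjoint_compl_left.mono_right sPm
  have dD4 : Disjoint (APm ∪ APp ∪ Pm) Pp := by
    rw [Finset.union_comm APm APp, hAPcov]
    exact Finset.disjoint_union_left.mpr ⟨disjoint_compl_left.mono_right sPp, dPpPm.symm⟩
  have covD : APm ∪ APp ∪ Pm ∪ Pp = Finset.univ := by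
    rw [Finset.union_comm APm APp, hAPcov, Finset.union_assoc, Finset.union_comm Pm Pp,
      hPcov, Finset.union_comm]
    exact Finset.union_compl _
  -- value computations
  have uAQp : ∀ j ∈ AQp, u j = 1 := by
    intro j hj; rw [hudef]; unfold xRestR; rw [if_pos hj]
  have uAQm : ∀ j ∈ AQm, u j = hbar⁻¹ := by
    intro j hj; rw [hudef]; unfold xRestR; rw [if_neg (nm dAQpAQm.symm hj), if_pos hj]
  have xPm : ∀ j ∈ Pm, x' j = 1 := by
    intro j hj; rw [hxdef]; unfold xRestR; rw [if_pos hj]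
  have xPp : ∀ j ∈ Pp, x' j = hbar := by
    intro j hj; rw [hxdef]; unfold xRestR; rw [if_neg (nm dPpPm hj), if_pos hj, inv_inv]
  have huQ : ∀ j ∈ Q,
      zetaR n a Qᶜ (Cmir n CQ) j * hbar⁻¹ ^ (-(cExpR n AQm (Cmir n CQ) j)) = u j := by
    intro j hj
    have h1 : j ∉ AQp := fun h => (Finset.mem_compl.mp (sAQp h)) hj
    have h2 : j ∉ AQm := fun h => (Finset.mem_compl.mp (sAQm h)) hj
    rw [hudef]; unfold xRestR zetaR cExpR Cmir
    rw [if_neg h1, if_neg h2, hAQcov]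
    simp [Finset.sum_neg_distrib, zpow_neg, inv_zpow]
  have hxPc : ∀ j ∈ (Pᶜ : Finset (Fin n)),
      x' j = zetaR n z P CP j * hbar ^ (-(cExpR n Pp CP j)) := by
    intro j hj
    have hjP : j ∉ P := Finset.mem_compl.mp hj
    have h1 : j ∉ Pm := fun h => hjP (sPm h)
    have h2 : j ∉ Pp := fun h => hjP (sPp h)
    rw [hxdef]; unfold xRestR zetaR cExpR Cmir
    rw [if_neg h1, if_neg h2, Finset.union_comm Pm Pp, hPcov]
    simp [Finset.sum_neg_distrib, zpow_neg, inv_zpow]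
  -- nonvanishing in convenient form
  have tQm : ∀ j ∈ Qm, thetaR q₀ (u j) ≠ 0 := by
    intro j hj; have h := hdQ'1 j hj; rwa [huQ j (sQm hj)] at h
  have tQp : ∀ j ∈ Qp, thetaR q₀ (hbar * u j) ≠ 0 := by
    intro j hj; have h := hdQ'2 j hj; rwa [inv_inv, huQ j (sQp hj)] at h
  -- the four product formulas
  have hA : stabR n q₀ hbar Pp Pm APp APm u (zetaR n z P CP) (cExpR n Pp CP)
      = ∏ j, (if j ∈ Pp then thetaR q₀ (hbar * u j) else if j ∈ Pm then thetaR q₀ (u j)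
          else if j ∈ APp then
            thetaR q₀ (u j * (zetaR n z P CP j * hbar ^ (-(cExpR n Pp CP j))))
              / thetaR q₀ (zetaR n z P CP j * hbar ^ (-(cExpR n Pp CP j)))
          else
            thetaR q₀ (u j * (zetaR n z P CP j * hbar ^ (-(cExpR n Pp CP j))))
              / thetaR q₀ (hbar⁻¹ * (zetaR n z P CP j * hbar ^ (-(cExpR n Pp CP j))))) := by
    unfold stabR
    refine prod4R dPpPm dA3 dA4 covA ?_ ?_ ?_ ?_
    · intro j hj; rw [if_pos hj]
    · intro j hj; rw [if_neg (nm dPpPm.symm hj), if_pos hj]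
    · intro j hj
      rw [if_neg (nm dPpAPp.symm hj), if_neg (nm dPmAPp.symm hj), if_pos hj]
    · intro j hj
      rw [if_neg (nm dPpAPm.symm hj), if_neg (nm dPmAPm.symm hj), if_neg (nm dAPpAPm.symm hj)]
  have hB : stabR n q₀ hbar Qp Qm AQp AQm u (zetaR n z Q CQ) (cExpR n Qp CQ)
      = ∏ j, (if j ∈ Qp then thetaR q₀ (hbar * u j) else if j ∈ Qm then thetaR q₀ (u j)
          else 1) := by
    unfold stabR
    refine prod4R dQpQm dB3 dB4 covB ?_ ?_ ?_ ?_
    · intro j hj; rw [if_pos hj]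
    · intro j hj; rw [if_neg (nm dQpQm.symm hj), if_pos hj]
    · intro j hj
      rw [uAQp j hj, one_mul, div_self (hdQ1 j hj), if_neg (nm dQpAQp.symm hj),
        if_neg (nm dQmAQp.symm hj)]
    · intro j hj
      rw [uAQm j hj, div_self (hdQ2 j hj), if_neg (nm dQpAQm.symm hj),
        if_neg (nm dQmAQm.symm hj)]
  have hC : stabR n q₀ hbar⁻¹ AQm AQp Qm Qp x' (zetaR n a Qᶜ (Cmir n CQ))
        (cExpR n AQm (Cmir n CQ))
      = ∏ j, (if j ∈ AQm then thetaR q₀ (hbar⁻¹ * x' j)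
          else if j ∈ AQp then thetaR q₀ (x' j)
          else if j ∈ Qm then thetaR q₀ (x' j * u j) / thetaR q₀ (u j)
          else thetaR q₀ (x' j * u j) / thetaR q₀ (hbar * u j)) := by
    unfold stabR
    refine prod4R dAQpAQm.symm dC3 dC4 covC ?_ ?_ ?_ ?_
    · intro j hj; rw [if_pos hj]
    · intro j hj; rw [if_neg (nm dAQpAQm hj), if_pos hj]
    · intro j hj
      rw [huQ j (sQm hj), if_neg (nm dQmAQm hj), if_neg (nm dQmAQp hj), if_pos hj]
    · intro j hj
      rw [huQ j (sQp hj), inv_inv, if_neg (nm dQpAQm hj), if_neg (nm dQpAQp hj),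
        if_neg (nm dQpQm hj)]
  have hD : stabR n q₀ hbar⁻¹ APm APp Pm Pp x' (zetaR n a Pᶜ (Cmir n CP))
        (cExpR n APm (Cmir n CP))
      = ∏ j, (if j ∈ APm then thetaR q₀ (hbar⁻¹ * x' j)
          else if j ∈ APp then thetaR q₀ (x' j) else 1) := by
    unfold stabR
    refine prod4R dAPpAPm.symm dD3 dD4 covD ?_ ?_ ?_ ?_
    · intro j hj; rw [if_pos hj]
    · intro j hj; rw [if_neg (nm dAPpAPm hj), if_pos hj]
    · intro j hj
      rw [xPm j hj, one_mul, div_self (hdP'1 j hj), if_neg (nm dPmAPm hj),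
        if_neg (nm dPmAPp hj)]
    · intro j hj
      have hne := hdP'2 j hj
      rw [inv_inv] at hne
      rw [xPp j hj, inv_inv, div_self hne, if_neg (nm dPpAPm hj), if_neg (nm dPpAPp hj)]
  have hPcase : ∀ j : Fin n, j ∈ Pp ∨ j ∈ Pm ∨ j ∈ APp ∨ j ∈ APm := by
    intro j
    have h : j ∈ Pp ∪ Pm ∪ APp ∪ APm := covA ▸ Finset.mem_univ j
    simpa [Finset.mem_union, or_assoc] using h
  have hQcase : ∀ j : Fin n, j ∈ Qp ∨ j ∈ Qm ∨ j ∈ AQp ∨ j ∈ AQm := by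
    intro j
    have h : j ∈ Qp ∪ Qm ∪ AQp ∪ AQm := covB ▸ Finset.mem_univ j
    simpa [Finset.mem_union, or_assoc] using h
  rw [div_eq_div_iff hSQ hSP', hA, hB, hC, hD, ← Finset.prod_mul_distrib,
    ← Finset.prod_mul_distrib]
  refine Finset.prod_congr rfl fun j _ => ?_
  rcases hPcase j with hP | hP | hP | hP <;> rcases hQcase j with hQ | hQ | hQ | hQ
  -- (Pp, Qp)
  · rw [if_pos hP, if_neg (nm dPpAPm hP), if_neg (nm dPpAPp hP),
      if_neg (nm dQpAQm hQ), if_neg (nm dQpAQp hQ), if_neg (nm dQpQm hQ), if_pos hQ,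
      xPp j hP, mul_one, div_mul_cancel₀ _ (tQp j hQ)]
  -- (Pp, Qm)
  · rw [if_pos hP, if_neg (nm dPpAPm hP), if_neg (nm dPpAPp hP),
      if_neg (nm dQmAQm hQ), if_neg (nm dQmAQp hQ), if_pos hQ,
      if_neg (nm dQpQm.symm hQ), if_pos hQ,
      xPp j hP, mul_one, div_mul_cancel₀ _ (tQm j hQ)]
  -- (Pp, AQp)
  · rw [if_pos hP, if_neg (nm dPpAPm hP), if_neg (nm dPpAPp hP),
      if_neg (nm dAQpAQm hQ), if_pos hQ,
      if_neg (nm dQpAQp.symm hQ), if_neg (nm dQmAQp.symm hQ),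
      uAQp j hQ, xPp j hP, mul_one hbar]
  -- (Pp, AQm)
  · rw [if_pos hP, if_neg (nm dPpAPm hP), if_neg (nm dPpAPp hP), if_pos hQ,
      if_neg (nm dQpAQm.symm hQ), if_neg (nm dQmAQm.symm hQ),
      uAQm j hQ, xPp j hP, mul_inv_cancel₀ (ne_of_gt hh), inv_mul_cancel₀ (ne_of_gt hh)]
  -- (Pm, Qp)
  · rw [if_neg (nm dPpPm.symm hP), if_pos hP, if_neg (nm dPmAPm hP), if_neg (nm dPmAPp hP),
      if_neg (nm dQpAQm hQ), if_neg (nm dQpAQp hQ), if_neg (nm dQpQm hQ), if_pos hQ,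
      xPm j hP, mul_one, one_mul, div_mul_cancel₀ _ (tQp j hQ)]
  -- (Pm, Qm)
  · rw [if_neg (nm dPpPm.symm hP), if_pos hP, if_neg (nm dPmAPm hP), if_neg (nm dPmAPp hP),
      if_neg (nm dQmAQm hQ), if_neg (nm dQmAQp hQ), if_pos hQ,
      if_neg (nm dQpQm.symm hQ), if_pos hQ,
      xPm j hP, mul_one, one_mul, div_mul_cancel₀ _ (tQm j hQ)]
  -- (Pm, AQp)
  · rw [if_neg (nm dPpPm.symm hP), if_pos hP, if_neg (nm dPmAPm hP), if_neg (nm dPmAPp hP),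
      if_neg (nm dAQpAQm hQ), if_pos hQ,
      if_neg (nm dQpAQp.symm hQ), if_neg (nm dQmAQp.symm hQ),
      uAQp j hQ, xPm j hP]
  -- (Pm, AQm)
  · rw [if_neg (nm dPpPm.symm hP), if_pos hP, if_neg (nm dPmAPm hP), if_neg (nm dPmAPp hP),
      if_pos hQ, if_neg (nm dQpAQm.symm hQ), if_neg (nm dQmAQm.symm hQ),
      uAQm j hQ, xPm j hP, mul_one hbar⁻¹]
  -- (APp, Qp)
  · rw [if_neg (nm dPpAPp.symm hP), if_neg (nm dPmAPp.symm hP), if_pos hP,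
      if_neg (nm dAPpAPm hP), if_pos hP,
      if_neg (nm dQpAQm hQ), if_neg (nm dQpAQp hQ), if_neg (nm dQpQm hQ), if_pos hQ,
      hxPc j (sAPp hP), div_mul_cancel₀ _ (hdP1 j hP), div_mul_cancel₀ _ (tQp j hQ),
      mul_comm (u j)]
  -- (APp, Qm)
  · rw [if_neg (nm dPpAPp.symm hP), if_neg (nm dPmAPp.symm hP), if_pos hP,
      if_neg (nm dAPpAPm hP), if_pos hP,
      if_neg (nm dQmAQm hQ), if_neg (nm dQmAQp hQ), if_pos hQ,
      if_neg (nm dQpQm.symm hQ), if_pos hQ,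
      hxPc j (sAPp hP), div_mul_cancel₀ _ (hdP1 j hP), div_mul_cancel₀ _ (tQm j hQ),
      mul_comm (u j)]
  -- (APp, AQp)
  · rw [if_neg (nm dPpAPp.symm hP), if_neg (nm dPmAPp.symm hP), if_pos hP,
      if_neg (nm dAPpAPm hP), if_pos hP,
      if_neg (nm dAQpAQm hQ), if_pos hQ,
      if_neg (nm dQpAQp.symm hQ), if_neg (nm dQmAQp.symm hQ),
      uAQp j hQ, hxPc j (sAPp hP), one_mul, div_mul_cancel₀ _ (hdP1 j hP), mul_one]
  -- (APp, AQm)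
  · rw [if_neg (nm dPpAPp.symm hP), if_neg (nm dPmAPp.symm hP), if_pos hP,
      if_neg (nm dAPpAPm hP), if_pos hP, if_pos hQ,
      if_neg (nm dQpAQm.symm hQ), if_neg (nm dQmAQm.symm hQ),
      uAQm j hQ, hxPc j (sAPp hP), div_mul_cancel₀ _ (hdP1 j hP), mul_one]
  -- (APm, Qp)
  · rw [if_neg (nm dPpAPm.symm hP), if_neg (nm dPmAPm.symm hP), if_neg (nm dAPpAPm.symm hP),
      if_pos hP,
      if_neg (nm dQpAQm hQ), if_neg (nm dQpAQp hQ), if_neg (nm dQpQm hQ), if_pos hQ,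
      hxPc j (sAPm hP), div_mul_cancel₀ _ (hdP2 j hP), div_mul_cancel₀ _ (tQp j hQ),
      mul_comm (u j)]
  -- (APm, Qm)
  · rw [if_neg (nm dPpAPm.symm hP), if_neg (nm dPmAPm.symm hP), if_neg (nm dAPpAPm.symm hP),
      if_pos hP,
      if_neg (nm dQmAQm hQ), if_neg (nm dQmAQp hQ), if_pos hQ,
      if_neg (nm dQpQm.symm hQ), if_pos hQ,
      hxPc j (sAPm hP), div_mul_cancel₀ _ (hdP2 j hP), div_mul_cancel₀ _ (tQm j hQ),
      mul_comm (u j)]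
  -- (APm, AQp)
  · rw [if_neg (nm dPpAPm.symm hP), if_neg (nm dPmAPm.symm hP), if_neg (nm dAPpAPm.symm hP),
      if_pos hP,
      if_neg (nm dAQpAQm hQ), if_pos hQ,
      if_neg (nm dQpAQp.symm hQ), if_neg (nm dQmAQp.symm hQ),
      uAQp j hQ, hxPc j (sAPm hP), one_mul, div_mul_cancel₀ _ (hdP2 j hP), mul_one]
  -- (APm, AQm)
  · rw [if_neg (nm dPpAPm.symm hP), if_neg (nm dPmAPm.symm hP), if_neg (nm dAPpAPm.symm hP),
      if_pos hP, if_pos hQ,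
      if_neg (nm dQpAQm.symm hQ), if_neg (nm dQmAQm.symm hQ),
      uAQm j hQ, hxPc j (sAPm hP), div_mul_cancel₀ _ (hdP2 j hP), mul_one]

end
end

section
/- Let 0 → ℚ^k →^ι ℚ^n →^β ℚ^d → 0 be a short exact sequence (ι injective, β surjective, range ι = ker β), and let S ⊆ {1,…,n} be a circuit, i.e. a minimal subset such that (β(e_i))_{i∈S} is linearly dependent over ℚ. Then the subspace {u ∈ ℚ^k : (ι u)_i = 0 for all i ∉ S} is one-dimensional; and if u_S is any nonzero element of it, then span_ℚ{ e_i^* ∘ ι : i ∉ S } = { f ∈ (ℚ^k)^* : f(u_S) = 0 }. In particular span_ℚ{e_i^* ∘ ι : i ∉ S} is a hyperplane in (ℚ^k)^*. -/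
open Finset

/-- for a circuit `S` of the exact sequence `0 → ℚ^k → ℚ^n → ℚ^d → 0`,
the space `{u ∈ ℚ^k : (ιu)ᵢ = 0 ∀ i ∉ S}` is one-dimensional, and for any nonzero
`u_S` in it, `span{eᵢ* ∘ ι : i ∉ S} = {f : f(u_S) = 0}`; in particular this span is a
hyperplane in the dual of `ℚ^k`. -/
theorem stmt_15 (k n d : ℕ)
    (ι : (Fin k → ℚ) →ₗ[ℚ] (Fin n → ℚ)) (β : (Fin n → ℚ) →ₗ[ℚ] (Fin d → ℚ))
    (hι : Function.Injective ι) (hβ : Function.Surjective β)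
    (hexact : LinearMap.range ι = LinearMap.ker β)
    (S : Finset (Fin n))
    (hdep : ¬ LinearIndependent ℚ (fun i : S => β (Pi.single (i : Fin n) 1)))
    (hmin : ∀ T : Finset (Fin n), T ⊂ S →
      LinearIndependent ℚ (fun i : T => β (Pi.single (i : Fin n) 1))) :
    Module.finrank ℚ
      ↥(⨅ i ∈ {i : Fin n | i ∉ S}, LinearMap.ker ((LinearMap.proj i).comp ι)) = 1 ∧
    ∀ uS : Fin k → ℚ, uS ≠ 0 → (∀ i, i ∉ S → ι uS i = 0) →
      (Submodule.span ℚ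
          ((fun i : Fin n => (LinearMap.proj i).comp ι) '' {i : Fin n | i ∉ S})
        = LinearMap.ker (LinearMap.applyₗ uS :
            Module.Dual ℚ (Fin k → ℚ) →ₗ[ℚ] ℚ)) ∧
      Module.finrank ℚ
        ↥(Submodule.span ℚ
          ((fun i : Fin n => (LinearMap.proj i).comp ι) '' {i : Fin n | i ∉ S}))
        = k - 1 := by
  classical
  set W : Submodule ℚ (Fin k → ℚ) :=
    ⨅ i ∈ {i : Fin n | i ∉ S}, LinearMap.ker ((LinearMap.proj i).comp ι) with hW
  have hmemW : ∀ u : Fin k → ℚ, u ∈ W ↔ ∀ i ∉ S, ι u i = 0 := by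
    intro u
    simp [hW, Submodule.mem_iInf, LinearMap.mem_ker]
  -- key : any relation supported in a proper subset of S is zero
  have key : ∀ T : Finset (Fin n), T ⊂ S → ∀ v : Fin n → ℚ, β v = 0 →
      (∀ i, i ∉ T → v i = 0) → v = 0 := by
    intro T hT v hv hsupp
    have hvsum : v = ∑ i ∈ T, v i • (Pi.single i 1 : Fin n → ℚ) := by
      funext j
      rw [Finset.sum_apply]
      by_cases hj : j ∈ T
      · rw [Finset.sum_eq_single j]
        · simp
        · intro b hb hbj
          simp [Pi.single_apply, Ne.symm hbj]
        · intro h; exact absurd hj h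
      · rw [hsupp j hj, Finset.sum_eq_zero]
        intro b hb
        have : j ≠ b := fun h => hj (h ▸ hb)
        simp [Pi.single_apply, this]
    have h0 : ∑ i : T, v (i : Fin n) • β (Pi.single (i : Fin n) 1) = 0 := by
      have : ∑ i : T, v (i : Fin n) • β (Pi.single (i : Fin n) 1)
          = β (∑ i ∈ T, v i • (Pi.single i 1 : Fin n → ℚ)) := by
        rw [map_sum]
        rw [← Finset.sum_attach T (fun i => β (v i • (Pi.single i 1 : Fin n → ℚ)))]
        simp [map_smul]
      rw [this, ← hvsum, hv]
    have hzero := Fintype.linearIndependent_iff.mp (hmin T hT)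
      (fun i : T => v (i : Fin n)) h0
    funext j
    by_cases hj : j ∈ T
    · exact hzero ⟨j, hj⟩
    · exact hsupp j hj
  -- a nonzero element of W
  obtain ⟨g, hgsum, i1, hgi⟩ := Fintype.not_linearIndependent_iff.mp hdep
  set v : Fin n → ℚ := ∑ i : S, g i • (Pi.single (i : Fin n) 1 : Fin n → ℚ) with hv
  have hβv : β v = 0 := by
    rw [hv, map_sum]
    simpa [map_smul] using hgsum
  have hvsupp : ∀ j, j ∉ S → v j = 0 := by
    intro j hj
    rw [hv, Finset.sum_apply]
    apply Finset.sum_eq_zero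
    intro b _
    have : j ≠ (b : Fin n) := fun h => hj (h ▸ b.2)
    simp [Pi.single_apply, this]
  have hvne : v ≠ 0 := by
    intro h
    apply hgi
    have : v (i1 : Fin n) = g i1 := by
      rw [hv, Finset.sum_apply]
      rw [Finset.sum_eq_single i1]
      · simp
      · intro b _ hb
        have : (i1 : Fin n) ≠ (b : Fin n) := fun hc => hb (Subtype.ext hc).symm
        simp [Pi.single_apply, this]
      · intro h; exact absurd (Finset.mem_univ i1) h
    rw [h] at this
    exact this.symm
  have hvmem : v ∈ LinearMap.range ι := by rw [hexact]; exact hβv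
  obtain ⟨u0, hu0⟩ := hvmem
  have hu0W : u0 ∈ W := (hmemW u0).mpr (by intro i hi; rw [hu0]; exact hvsupp i hi)
  have hu0ne : u0 ≠ 0 := by
    intro h
    apply hvne
    rw [← hu0, h, map_zero]
  -- S is nonempty
  have hSne : S.Nonempty := by
    rcases S.eq_empty_or_nonempty with h | h
    · exfalso
      apply hdep
      subst h
      exact linearIndependent_empty_type
    · exact h
  obtain ⟨i0, hi0⟩ := hSne
  -- any nonzero u ∈ W has (ι u) i0 ≠ 0
  have hfull : ∀ u : Fin k → ℚ, u ∈ W → u ≠ 0 → ι u i0 ≠ 0 := by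
    intro u hu hune h0
    apply hune
    apply hι
    rw [map_zero]
    apply key (S.erase i0) (Finset.erase_ssubset hi0)
    · have : ι u ∈ LinearMap.range ι := ⟨u, rfl⟩
      rw [hexact] at this
      exact this
    · intro i hi
      by_cases hiS : i ∈ S
      · have : i = i0 := by
          by_contra hne
          exact hi (Finset.mem_erase.mpr ⟨hne, hiS⟩)
        rw [this]; exact h0
      · exact (hmemW u).mp hu i hiS
  -- W is the span of any of its nonzero elements
  have Wspan : ∀ u : Fin k → ℚ, u ∈ W → u ≠ 0 → W = Submodule.span ℚ {u} := by
    intro u hu hune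
    apply le_antisymm
    · intro w hw
      have hui0 : ι u i0 ≠ 0 := hfull u hu hune
      set c : ℚ := ι w i0 / ι u i0 with hc
      have hsub : w - c • u ∈ W := W.sub_mem hw (W.smul_mem c hu)
      have hzero : w - c • u = 0 := by
        by_contra hne
        apply hfull (w - c • u) hsub hne
        rw [map_sub, map_smul]
        simp only [Pi.sub_apply, Pi.smul_apply, smul_eq_mul]
        rw [hc, div_mul_cancel₀ _ hui0, sub_self]
      have : w = c • u := by
        rw [sub_eq_zero] at hzero
        exact hzero
      rw [this]
      exact Submodule.smul_mem _ _ (Submodule.mem_span_singleton_self u)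
    · rw [Submodule.span_le, Set.singleton_subset_iff]
      exact hu
  constructor
  · rw [Wspan u0 hu0W hu0ne, finrank_span_singleton hu0ne]
  · intro uS hne hsupp
    have huSW : uS ∈ W := (hmemW uS).mpr hsupp
    have hWspan : W = Submodule.span ℚ {uS} := Wspan uS huSW hne
    set Φ : Set (Module.Dual ℚ (Fin k → ℚ)) :=
      (fun i : Fin n => (LinearMap.proj i).comp ι) '' {i : Fin n | i ∉ S} with hΦ
    have hco : (Submodule.span ℚ Φ).dualCoannihilator = W := by
      apply SetLike.coe_injective
      rw [Submodule.coe_dualCoannihilator_span]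
      ext x
      simp only [Set.mem_setOf_eq, SetLike.mem_coe, hmemW, hΦ, Set.mem_image]
      constructor
      · intro h i hi
        exact h _ ⟨i, hi, rfl⟩
      · rintro h f ⟨i, hi, rfl⟩
        exact h i hi
    have hann : W.dualAnnihilator
        = LinearMap.ker (LinearMap.applyₗ uS :
            Module.Dual ℚ (Fin k → ℚ) →ₗ[ℚ] ℚ) := by
      rw [hWspan]
      ext f
      simp only [Submodule.mem_dualAnnihilator, LinearMap.mem_ker,
        Submodule.mem_span_singleton, LinearMap.applyₗ_apply_apply]
      constructor
      · intro h
        exact h uS ⟨1, one_smul _ _⟩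
      · rintro h w ⟨c, rfl⟩
        rw [map_smul, h, smul_zero]
    have hmain : Submodule.span ℚ Φ
        = LinearMap.ker (LinearMap.applyₗ uS :
            Module.Dual ℚ (Fin k → ℚ) →ₗ[ℚ] ℚ) := by
      rw [← Subspace.dualCoannihilator_dualAnnihilator_eq
        (W := Submodule.span ℚ Φ), hco, hann]
    refine ⟨hmain, ?_⟩
    have hdim := Subspace.finrank_add_finrank_dualCoannihilator_eq (Submodule.span ℚ Φ)
    rw [hco, hWspan, finrank_span_singleton hne] at hdim
    have : Module.finrank ℚ (Fin k → ℚ) = k := by simp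
    rw [this] at hdim
    exact Nat.eq_sub_of_add_eq hdim
end
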